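/- There exists a finite rank bounded linear operator S on complex ℓ₂, namely S(x) = (x₁, 0, 0, ...), such that P = I - S has norm one, and there exist a character φ in the fiber M₀(B_{ℓ₂}) of the spectrum of H^∞(B_{ℓ₂}) over 0 and a function f ∈ H^∞(B_{ℓ₂}), namely f(x) = x₁ / √(1 - Σ_{j≥2} x_j²) (principal branch of the square root), such that φ(f) = 1 while φ(f ∘ P) = 0; in particular f̂(φ) ≠ (f ∘ P)^(φ). -/

import Mathlib

open Metric Filter Topology

namespace ClusterValue

variable (X : Type*) [NormedAddCommGroup X] [NormedSpace ℂ X]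

/-- Membership in `A_u(B)`: analytic on the open unit ball, bounded there,
and uniformly continuous there. -/
def MemAu (f : X → ℂ) : Prop :=
  AnalyticOn ℂ f (ball (0 : X) 1) ∧ (∃ C : ℝ, ∀ x ∈ ball (0 : X) 1, ‖f x‖ ≤ C) ∧
    UniformContinuousOn f (ball (0 : X) 1)

/-- Membership in `H^∞(B)`: analytic on the open unit ball and bounded there. -/
def MemHinf (f : X → ℂ) : Prop :=
  AnalyticOn ℂ f (ball (0 : X) 1) ∧ (∃ C : ℝ, ∀ x ∈ ball (0 : X) 1, ‖f x‖ ≤ C)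

/-- A character (nonzero continuous multiplicative linear functional) of the algebra
of functions on the open unit ball of `X` determined by the membership predicate `Mem`.
Functions are identified when they agree on the ball. -/
structure Character (Mem : (X → ℂ) → Prop) : Type _ where
  toFun : (X → ℂ) → ℂ
  congr' : ∀ f g, Mem f → Mem g → (∀ x ∈ ball (0 : X) 1, f x = g x) → toFun f = toFun g
  map_add' : ∀ f g, Mem f → Mem g → toFun (f + g) = toFun f + toFun g
  map_mul' : ∀ f g, Mem f → Mem g → toFun (f * g) = toFun f * toFun g
  map_smul' : ∀ (c : ℂ) (f), Mem f → toFun (c • f) = c * toFun f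
  map_one' : toFun 1 = 1
  continuous' : ∃ C : ℝ, ∀ (f : X → ℂ) (M : ℝ), Mem f →
    (∀ x ∈ ball (0 : X) 1, ‖f x‖ ≤ M) → ‖toFun f‖ ≤ C * M

variable {X}

/-- The fiber over `0`: characters annihilating all continuous linear functionals. -/
def Character.inFiberZero {Mem : (X → ℂ) → Prop} (τ : Character X Mem) : Prop :=
  ∀ φ : X →L[ℂ] ℂ, τ.toFun ⇑φ = 0

/-- The fiber over `x'' ∈ X**`. -/
def Character.inFiber {Mem : (X → ℂ) → Prop} (τ : Character X Mem)
    (x'' : (X →L[ℂ] ℂ) →L[ℂ] ℂ) : Prop :=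
  ∀ φ : X →L[ℂ] ℂ, τ.toFun ⇑φ = x'' φ

variable (X)

/-- The cluster set of `f` at `0`: limits of `f` along weakly null nets (filters) in the ball. -/
def clusterSetZero (f : X → ℂ) : Set ℂ :=
  {z | ∃ l : Filter X, l.NeBot ∧ l ≤ 𝓟 (ball (0 : X) 1) ∧
    (∀ φ : X →L[ℂ] ℂ, Tendsto (fun x => φ x) l (𝓝 0)) ∧ Tendsto f l (𝓝 z)}

/-- The cluster set of `f` at `x'' ∈ X**`: limits of `f` along nets in the ball converging
weak-star to `x''`. -/
def clusterSet (f : X → ℂ) (x'' : (X →L[ℂ] ℂ) →L[ℂ] ℂ) : Set ℂ :=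
  {z | ∃ l : Filter X, l.NeBot ∧ l ≤ 𝓟 (ball (0 : X) 1) ∧
    (∀ φ : X →L[ℂ] ℂ, Tendsto (fun x => φ x) l (𝓝 (x'' φ))) ∧ Tendsto f l (𝓝 z)}

/-- A finite rank (bounded linear) operator. -/
def FiniteRank (S : X →L[ℂ] X) : Prop :=
  FiniteDimensional ℂ ↥(LinearMap.range (S : X →ₗ[ℂ] X))

/-- Finite type polynomials: the subalgebra of functions generated by the
continuous linear functionals (and constants). -/
def IsFiniteTypePoly (p : X → ℂ) : Prop :=
  p ∈ Algebra.adjoin ℂ (Set.range fun φ : X →L[ℂ] ℂ => (⇑φ : X → ℂ))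

/-- Membership in `A(B)`: uniform limits on the ball of finite type polynomials. -/
def MemA (f : X → ℂ) : Prop :=
  ∀ ε > (0 : ℝ), ∃ p : X → ℂ, IsFiniteTypePoly X p ∧ ∀ x ∈ ball (0 : X) 1, ‖f x - p x‖ ≤ ε

/-- A continuous polynomial: a finite sum of (diagonals of) continuous multilinear maps. -/
def IsContPoly (p : X → ℂ) : Prop :=
  ∃ (N : ℕ) (M : ∀ k : ℕ, ContinuousMultilinearMap ℂ (fun _ : Fin k => X) ℂ),
    ∀ x, p x = ∑ k ∈ Finset.range N, M k (fun _ => x)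

end ClusterValue

/-!
Take `x_n = (1 - c) c e₀ + √(1 - c²) e_{n+1}` with `c = 1/(n+1)`. These points lie in the ball,
tend weakly to `0`, and `f(x_n) = 1 - c → 1`, while `f ∘ (I - S)` vanishes identically since
`I - S` kills the first coordinate. Evaluation at the limit of `x_n` along an ultrafilter finer
than `atTop` is a character of `H^∞` (bounded scalar families converge along ultrafilters); it lies
over `0` because `x_n ⇀ 0`, and it separates `f` from `f ∘ (I - S)`.

That `f ∈ H^∞` comes from writing `∑_{j ≥ 1} x_j² = ⟪star ((I - S) x), (I - S) x⟫`, a continuous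
quadratic form of modulus at most `‖x‖² - |x₀|²`: on the ball the radicand has real part
`> |x₀|²`, so the principal square root is analytic there and `|f| ≤ 1`.
-/

open scoped lp InnerProductSpace

theorem Ultrafilter.tendsto_limUnder_of_isBounded {α ι : Type*} [PseudoMetricSpace α]
    [ProperSpace α] [Nonempty α] (U : Ultrafilter ι) {v : ι → α}
    (hv : Bornology.IsBounded (Set.range v)) :
    Tendsto v U (𝓝 (limUnder (U : Filter ι) v)) := by
  obtain ⟨z, -, hz⟩ := hv.isCompact_closure.ultrafilter_le_nhds (U.map v)
    (le_principal_iff.mpr (U.mem_map.mpr (Filter.univ_mem' fun i => subset_closure ⟨i, rfl⟩)))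
  exact tendsto_nhds_limUnder ⟨z, hz⟩

theorem Orthonormal.tendsto_dual_apply_cofinite_zero {𝕜 E ι : Type*} [RCLike 𝕜]
    [NormedAddCommGroup E] [InnerProductSpace 𝕜 E] [CompleteSpace E] {v : ι → E}
    (hv : Orthonormal 𝕜 v) (ψ : E →L[𝕜] 𝕜) : Tendsto (ψ ∘ v) cofinite (𝓝 0) := by
  obtain ⟨w, rfl⟩ := (InnerProductSpace.toDual 𝕜 E).surjective ψ
  have hsq := (Real.continuous_sqrt.tendsto 0).comp
    (hv.inner_products_summable w).tendsto_cofinite_zero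
  rw [tendsto_zero_iff_norm_tendsto_zero]
  simpa [Function.comp_def, norm_inner_symm w] using hsq

theorem lp.orthonormal_single {𝕜 ι : Type*} [RCLike 𝕜] [DecidableEq ι] :
    Orthonormal 𝕜 fun i : ι => lp.single 2 i (1 : 𝕜) := by
  rw [orthonormal_iff_ite]
  intro i j
  rw [lp.inner_single_left, lp.single_apply, Pi.single_apply]
  split_ifs <;> simp

namespace ClusterValue

variable {X ι : Type*} [NormedAddCommGroup X]

theorem tendsto_limUnder_comp_of_bounded (U : Ultrafilter ι) {u : ι → X}
    (hu : ∀ i, u i ∈ ball (0 : X) 1) {f : X → ℂ}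
    (hf : ∃ C : ℝ, ∀ x ∈ ball (0 : X) 1, ‖f x‖ ≤ C) :
    Tendsto (f ∘ u) U (𝓝 (limUnder (U : Filter ι) (f ∘ u))) := by
  obtain ⟨C, hC⟩ := hf
  refine U.tendsto_limUnder_of_isBounded (isBounded_iff_forall_norm_le.mpr ⟨C, ?_⟩)
  rintro _ ⟨i, rfl⟩
  exact hC _ (hu i)

noncomputable def Character.ultralimit {Mem : (X → ℂ) → Prop}
    (hMem : ∀ f, Mem f → ∃ C : ℝ, ∀ x ∈ ball (0 : X) 1, ‖f x‖ ≤ C)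
    (U : Ultrafilter ι) (u : ι → X) (hu : ∀ i, u i ∈ ball (0 : X) 1) : Character X Mem where
  toFun f := limUnder (U : Filter ι) (f ∘ u)
  congr' f g _ _ hfg := by rw [show f ∘ u = g ∘ u from funext fun i => hfg _ (hu i)]
  map_add' f g hf hg :=
    ((tendsto_limUnder_comp_of_bounded U hu (hMem f hf)).add
      (tendsto_limUnder_comp_of_bounded U hu (hMem g hg))).limUnder_eq
  map_mul' f g hf hg :=
    ((tendsto_limUnder_comp_of_bounded U hu (hMem f hf)).mul
      (tendsto_limUnder_comp_of_bounded U hu (hMem g hg))).limUnder_eq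
  map_smul' c f hf := ((tendsto_limUnder_comp_of_bounded U hu (hMem f hf)).const_mul c).limUnder_eq
  map_one' := tendsto_const_nhds.limUnder_eq
  continuous' := ⟨1, fun f M hf hM => by
    rw [one_mul]
    exact le_of_tendsto (tendsto_limUnder_comp_of_bounded U hu (hMem f hf)).norm
      (Eventually.of_forall fun i => hM _ (hu i))⟩

section ultralimit

variable {Mem : (X → ℂ) → Prop} (hMem : ∀ f, Mem f → ∃ C : ℝ, ∀ x ∈ ball (0 : X) 1, ‖f x‖ ≤ C)
  (U : Ultrafilter ι) (u : ι → X) (hu : ∀ i, u i ∈ ball (0 : X) 1)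

theorem Character.ultralimit_apply_of_tendsto {f : X → ℂ} {z : ℂ}
    (hf : Tendsto (f ∘ u) U (𝓝 z)) : (Character.ultralimit hMem U u hu).toFun f = z :=
  hf.limUnder_eq

theorem Character.ultralimit_inFiberZero [NormedSpace ℂ X]
    (hw : ∀ ψ : X →L[ℂ] ℂ, Tendsto (ψ ∘ u) U (𝓝 0)) :
    (Character.ultralimit hMem U u hu).inFiberZero := fun ψ =>
  ultralimit_apply_of_tendsto hMem U u hu (hw ψ)

end ultralimit

local notation "ℓ²" => ℓ²(ℕ, ℂ)

/-- The operator `S` of the theorem is the orthogonal projection onto this line. -/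
noncomputable abbrev firstAxis : Submodule ℂ ℓ² := ℂ ∙ lp.single 2 0 1

theorem starProjection_firstAxis_apply (x : ℓ²) :
    firstAxis.starProjection x = x 0 • lp.single 2 0 1 := by
  rw [Submodule.starProjection_unit_singleton ℂ (lp.orthonormal_single.1 0),
    lp.inner_single_left]
  simp

theorem starProjection_firstAxis_apply_apply (x : ℓ²) (n : ℕ) :
    firstAxis.starProjection x n = if n = 0 then x 0 else 0 := by
  rw [starProjection_firstAxis_apply, lp.coeFn_smul, Pi.smul_apply, lp.single_apply,
    Pi.single_apply]
  split_ifs <;> simp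

theorem starProjection_firstAxis_orthogonal_apply (x : ℓ²) (n : ℕ) :
    firstAxisᗮ.starProjection x n = if n = 0 then 0 else x n := by
  rw [Submodule.starProjection_orthogonal_val, lp.coeFn_sub,
    Pi.sub_apply, starProjection_firstAxis_apply_apply]
  split_ifs with h <;> simp [h]

theorem finiteDimensional_range_starProjection_firstAxis :
    FiniteDimensional ℂ (LinearMap.range (firstAxis.starProjection : ℓ² →ₗ[ℂ] ℓ²)) := by
  have : LinearMap.range (firstAxis.starProjection : ℓ² →ₗ[ℂ] ℓ²) = firstAxis :=
    Submodule.range_starProjection _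
  rw [this]
  infer_instance

theorem norm_starProjection_firstAxis_orthogonal : ‖firstAxisᗮ.starProjection‖ = 1 := by
  refine Submodule.norm_starProjection _ (Submodule.ne_bot_iff _ |>.mpr ⟨lp.single 2 1 1, ?_, ?_⟩)
  · rw [Submodule.mem_orthogonal_singleton_iff_inner_right]
    exact lp.orthonormal_single.2 (by decide)
  · exact lp.orthonormal_single.ne_zero 1

theorem tsum_sq_succ_eq_inner_star (x : ℓ²) :
    ∑' j : ℕ, x (j + 1) ^ 2 =
      ⟪star (firstAxisᗮ.starProjection x), firstAxisᗮ.starProjection x⟫_ℂ := by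
  set y := firstAxisᗮ.starProjection x
  have hy (n : ℕ) : y n = if n = 0 then 0 else x n := starProjection_firstAxis_orthogonal_apply x n
  have h := lp.hasSum_inner (𝕜 := ℂ) (star y) y
  rw [← hasSum_nat_add_iff' 1] at h
  simp only [lp.star_apply, hy, Finset.sum_range_one, if_pos, Nat.add_one_ne_zero] at h
  simpa [sq] using h.tsum_eq

theorem norm_tsum_sq_succ_le (x : ℓ²) : ‖∑' j : ℕ, x (j + 1) ^ 2‖ ≤ ‖x‖ ^ 2 - ‖x 0‖ ^ 2 := by
  have hS : ‖firstAxis.starProjection x‖ = ‖x 0‖ := by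
    rw [starProjection_firstAxis_apply, norm_smul, lp.orthonormal_single.1 0, mul_one]
  rw [tsum_sq_succ_eq_inner_star, Submodule.norm_sq_eq_add_norm_sq_starProjection x firstAxis, hS,
    add_sub_cancel_left, sq]
  simpa only [norm_star] using norm_inner_le_norm (𝕜 := ℂ) (star (firstAxisᗮ.starProjection x))
    (firstAxisᗮ.starProjection x)

theorem sq_norm_apply_zero_lt_re {x : ℓ²} (hx : x ∈ ball 0 1) :
    ‖x 0‖ ^ 2 < (1 - ∑' j : ℕ, x (j + 1) ^ 2).re := by
  have hx1 : ‖x‖ ^ 2 < 1 := by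
    rw [mem_ball_zero_iff] at hx
    nlinarith [norm_nonneg x]
  rw [Complex.sub_re, Complex.one_re]
  linarith [Complex.re_le_norm (∑' j : ℕ, x (j + 1) ^ 2), norm_tsum_sq_succ_le x]

/-- The complex-bilinear (not sesquilinear) pairing `∑ xᵢ yᵢ`. -/
noncomputable def sqForm : ℓ² →L[ℂ] ℓ² →L[ℂ] ℂ :=
  (innerSL ℂ).comp (starL ℂ : ℓ² ≃L⋆[ℂ] ℓ²).toContinuousLinearMap

theorem analyticAt_tsum_sq_succ (x : ℓ²) :
    AnalyticAt ℂ (fun x : ℓ² => ∑' j : ℕ, x (j + 1) ^ 2) x := by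
  have hP := firstAxisᗮ.starProjection.analyticAt x
  rw [funext tsum_sq_succ_eq_inner_star]
  exact (sqForm.analyticAt_bilinear _).comp (hP.prod hP)

theorem _root_.Complex.norm_div_cpow_one_half_le_one {z w : ℂ} (h : ‖z‖ ^ 2 ≤ ‖w‖) :
    ‖z / w ^ ((1 : ℂ) / 2)‖ ≤ 1 := by
  have hw : ‖w ^ ((1 : ℂ) / 2)‖ = √‖w‖ := by
    rw [show (1 : ℂ) / 2 = ((1 / 2 : ℝ) : ℂ) by push_cast; rfl, Complex.norm_cpow_real,
      Real.sqrt_eq_rpow]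
  rw [norm_div, hw]
  exact div_le_one_of_le₀ (Real.le_sqrt_of_sq_le h) (Real.sqrt_nonneg _)

noncomputable def aronFunction (x : ℓ²) : ℂ := x 0 / (1 - ∑' j : ℕ, x (j + 1) ^ 2) ^ ((1 : ℂ) / 2)

theorem analyticAt_aronFunction {x : ℓ²} (hx : x ∈ ball 0 1) : AnalyticAt ℂ aronFunction x := by
  have hslit : 1 - ∑' j : ℕ, x (j + 1) ^ 2 ∈ Complex.slitPlane :=
    Complex.mem_slitPlane_iff.mpr (Or.inl ((sq_nonneg _).trans_lt (sq_norm_apply_zero_lt_re hx)))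
  have hnum : AnalyticAt ℂ (fun x : ℓ² => x 0) x := (lp.evalCLM ℂ (fun _ : ℕ => ℂ) 2 0).analyticAt x
  refine hnum.div ((analyticAt_const.sub (analyticAt_tsum_sq_succ x)).cpow analyticAt_const hslit)
    fun h => Complex.slitPlane_ne_zero hslit ((Complex.cpow_eq_zero_iff _ _).mp h).1

theorem memHinf_aronFunction : MemHinf ℓ² aronFunction :=
  ⟨fun _ hx => (analyticAt_aronFunction hx).analyticWithinAt, 1, fun _ hx =>
    Complex.norm_div_cpow_one_half_le_one
      ((sq_norm_apply_zero_lt_re hx).le.trans (Complex.re_le_norm _))⟩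

theorem aronFunction_starProjection_firstAxis_orthogonal (x : ℓ²) :
    aronFunction (firstAxisᗮ.starProjection x) = 0 := by
  rw [aronFunction, starProjection_firstAxis_orthogonal_apply, if_pos rfl, zero_div]

noncomputable def aronPoint (c : ℝ) (m : ℕ) : ℓ² :=
  (((1 - c) * c : ℝ) : ℂ) • lp.single 2 0 1 + ((√(1 - c ^ 2) : ℝ) : ℂ) • lp.single 2 (m + 1) 1

theorem aronPoint_apply_zero (c : ℝ) (m : ℕ) : aronPoint c m 0 = ((1 - c) * c : ℝ) := by
  simp only [aronPoint, lp.coeFn_add, lp.coeFn_smul, Pi.add_apply, Pi.smul_apply, lp.single_apply]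
  simp

theorem aronPoint_apply_succ (c : ℝ) (m j : ℕ) :
    aronPoint c m (j + 1) = if j = m then ((√(1 - c ^ 2) : ℝ) : ℂ) else 0 := by
  simp only [aronPoint, lp.coeFn_add, lp.coeFn_smul, Pi.add_apply, Pi.smul_apply, lp.single_apply]
  split_ifs with h <;> simp [h]

theorem aronPoint_mem_ball {c : ℝ} (hc₀ : 0 < c) (hc₁ : c ≤ 1) (m : ℕ) :
    aronPoint c m ∈ ball 0 1 := by
  have horth : ⟪(((1 - c) * c : ℝ) : ℂ) • (lp.single 2 0 1 : ℓ²),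
      ((√(1 - c ^ 2) : ℝ) : ℂ) • lp.single 2 (m + 1) 1⟫_ℂ = 0 := by
    rw [inner_smul_left, inner_smul_right, lp.orthonormal_single.2 (by omega), mul_zero, mul_zero]
  have hsq : ‖aronPoint c m‖ ^ 2 = ((1 - c) * c) ^ 2 + (1 - c ^ 2) := by
    rw [aronPoint, sq, norm_add_sq_eq_norm_sq_add_norm_sq_of_inner_eq_zero _ _ horth]
    simp only [norm_smul, lp.orthonormal_single.1, Complex.norm_real, Real.norm_eq_abs, mul_one,
      ← sq, sq_abs, Real.sq_sqrt (by nlinarith : 0 ≤ 1 - c ^ 2)]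
  rw [mem_ball_zero_iff, ← sq_lt_one_iff₀ (norm_nonneg _), hsq]
  nlinarith [mul_pos hc₀ hc₀, mul_pos (mul_pos hc₀ hc₀) hc₀]

theorem aronFunction_aronPoint {c : ℝ} (hc₀ : 0 < c) (hc₁ : c ≤ 1) (m : ℕ) :
    aronFunction (aronPoint c m) = 1 - c := by
  have htsum : ∑' j : ℕ, aronPoint c m (j + 1) ^ 2 = ((1 - c ^ 2 : ℝ) : ℂ) := by
    rw [tsum_eq_single m fun j hj => by simp [aronPoint_apply_succ, hj], aronPoint_apply_succ,
      if_pos rfl, ← Complex.ofReal_pow, Real.sq_sqrt (by nlinarith)]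
  have hroot : ((c ^ 2 : ℝ) : ℂ) ^ ((1 : ℂ) / 2) = c := by
    rw [show (1 : ℂ) / 2 = ((1 / 2 : ℝ) : ℂ) by push_cast; rfl, ← Complex.ofReal_cpow (sq_nonneg c),
      ← Real.sqrt_eq_rpow, Real.sqrt_sq hc₀.le]
  have hrad : (1 : ℂ) - ((1 - c ^ 2 : ℝ) : ℂ) = ((c ^ 2 : ℝ) : ℂ) := by push_cast; ring
  rw [aronFunction, htsum, aronPoint_apply_zero, hrad, hroot]
  push_cast
  field_simp [Complex.ofReal_ne_zero.mpr hc₀.ne']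

theorem tendsto_dual_aronPoint (ψ : ℓ² →L[ℂ] ℂ) {c : ℕ → ℝ} (hc : Tendsto c atTop (𝓝 0)) :
    Tendsto (fun n => ψ (aronPoint (c n) n)) atTop (𝓝 0) := by
  have he : Tendsto (fun n => ψ (lp.single 2 (n + 1) 1)) atTop (𝓝 0) := by
    have := lp.orthonormal_single.tendsto_dual_apply_cofinite_zero ψ
    rw [Nat.cofinite_eq_atTop] at this
    exact this.comp (tendsto_add_atTop_nat 1)
  have ha : Tendsto (fun n => (((1 - c n) * c n : ℝ) : ℂ)) atTop (𝓝 0) := by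
    simpa [Function.comp_def] using (Complex.continuous_ofReal.tendsto _).comp
      (((tendsto_const_nhds (x := (1 : ℝ))).sub hc).mul hc)
  have hb : Tendsto (fun n => ((√(1 - c n ^ 2) : ℝ) : ℂ)) atTop (𝓝 1) := by
    simpa [Function.comp_def] using (Complex.continuous_ofReal.tendsto _).comp
      ((tendsto_const_nhds (x := (1 : ℝ))).sub (hc.pow 2)).sqrt
  simpa [aronPoint] using (ha.mul_const (ψ (lp.single 2 0 1))).add (hb.mul he)

end ClusterValue

open Metric Filter Topology ClusterValue in
/-- Aron's example: there is a finite rank operator `S` on `ℓ₂`, namely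
`S x = (x₁, 0, 0, …)`, with `‖I - S‖ = 1`, a character `φ` of `H^∞(B_{ℓ₂})` in the fiber
over `0`, and `f ∈ H^∞(B_{ℓ₂})`, namely `f x = x₁ / √(1 - ∑_{j ≥ 2} x_j²)` (principal
branch), such that `φ(f) = 1` while `φ(f ∘ P) = 0`; in particular `φ(f) ≠ φ(f ∘ P)`. -/
theorem statement2 :
    ∃ S : lp (fun _ : ℕ => ℂ) 2 →L[ℂ] lp (fun _ : ℕ => ℂ) 2,
      (∀ (x : lp (fun _ : ℕ => ℂ) 2) (n : ℕ), S x n = if n = 0 then x 0 else 0) ∧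
      FiniteRank (lp (fun _ : ℕ => ℂ) 2) S ∧
      ‖ContinuousLinearMap.id ℂ (lp (fun _ : ℕ => ℂ) 2) - S‖ = 1 ∧
      ∃ f : lp (fun _ : ℕ => ℂ) 2 → ℂ, MemHinf (lp (fun _ : ℕ => ℂ) 2) f ∧
        (∀ x ∈ ball (0 : lp (fun _ : ℕ => ℂ) 2) 1,
          f x = x 0 / ((1 - ∑' j : ℕ, (x (j + 1)) ^ 2) ^ ((1 : ℂ) / 2))) ∧
        ∃ φ : Character (lp (fun _ : ℕ => ℂ) 2) (MemHinf (lp (fun _ : ℕ => ℂ) 2)),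
          φ.inFiberZero ∧
          φ.toFun f = 1 ∧
          φ.toFun (fun x => f ((ContinuousLinearMap.id ℂ (lp (fun _ : ℕ => ℂ) 2) - S) x)) = 0 ∧
          φ.toFun f ≠
            φ.toFun (fun x => f ((ContinuousLinearMap.id ℂ (lp (fun _ : ℕ => ℂ) 2) - S) x)) := by
  have hP : ContinuousLinearMap.id ℂ _ - firstAxis.starProjection = firstAxisᗮ.starProjection :=
    (Submodule.starProjection_orthogonal _).symm
  let c : ℕ → ℝ := fun n => 1 / (n + 1)
  have hc : Tendsto c atTop (𝓝 0) := tendsto_one_div_add_atTop_nhds_zero_nat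
  have hc₀ (n : ℕ) : 0 < c n := Nat.one_div_pos_of_nat
  have hc₁ (n : ℕ) : c n ≤ 1 := div_le_one_of_le₀ (by simp) (by positivity)
  let φ : Character (lp (fun _ : ℕ => ℂ) 2) (MemHinf (lp (fun _ : ℕ => ℂ) 2)) :=
    Character.ultralimit (fun _ hf => hf.2) (Ultrafilter.of atTop)
      (fun n => aronPoint (c n) n) (fun n => aronPoint_mem_ball (hc₀ n) (hc₁ n) n)
  have hφf : φ.toFun aronFunction = 1 := by
    refine Character.ultralimit_apply_of_tendsto _ _ _ _ (Tendsto.mono_left ?_ (Ultrafilter.of_le _))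
    simpa [Function.comp_def, aronFunction_aronPoint (hc₀ _) (hc₁ _)] using
      (tendsto_const_nhds (x := (1 : ℂ))).sub ((Complex.continuous_ofReal.tendsto 0).comp hc)
  have hφfP : φ.toFun (fun x => aronFunction (firstAxisᗮ.starProjection x)) = 0 :=
    Character.ultralimit_apply_of_tendsto _ _ _ _ (by
      simp only [Function.comp_def, aronFunction_starProjection_firstAxis_orthogonal]
      exact tendsto_const_nhds)
  refine ⟨firstAxis.starProjection, starProjection_firstAxis_apply_apply,
    finiteDimensional_range_starProjection_firstAxis, hP ▸ norm_starProjection_firstAxis_orthogonal,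
    aronFunction, memHinf_aronFunction, fun _ _ => rfl, φ,
    Character.ultralimit_inFiberZero _ _ _ _ fun ψ =>
      (tendsto_dual_aronPoint ψ hc).mono_left (Ultrafilter.of_le _),
    hφf, hP ▸ hφfP, ?_⟩
  rw [hP, hφf, hφfP]
  exact one_ne_zero
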